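/- arXiv:1808.07722 — 2 statements merged into one kernel-verified Lean document; each statement's English description precedes it below -/
import Mathlib

section
/- For a fixed generating set, the set of letters (generators) appearing in any word representing a given element of an Artin monoid is independent of the chosen word representative; that is, the notion of 'letters appearing in an element' is well defined. -/
namespace ArtinStmt

/-- The alternating word π(s,t;k) = stst... of length k in the free monoid. -/
def altWord {S : Type*} (s t : S) : ℕ → FreeMonoid S
  | 0 => 1
  | n + 1 => FreeMonoid.of s * altWord t s n

/-- The braid/Artin relations coming from a Coxeter-type matrix `M`
(with `M s t = 0` encoding `∞`, i.e. no relation). -/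
def artinRel {S : Type*} (M : S → S → ℕ) (x y : FreeMonoid S) : Prop :=
  ∃ s t, s ≠ t ∧ M s t ≠ 0 ∧ x = altWord s t (M s t) ∧ y = altWord t s (M s t)

/-- The congruence on the free monoid generated by the Artin relations. -/
def artinCon {S : Type*} (M : S → S → ℕ) : Con (FreeMonoid S) := conGen (artinRel M)

/-- The Artin monoid associated to the matrix `M`. -/
abbrev ArtinMonoid {S : Type*} (M : S → S → ℕ) := (artinCon M).Quotient

/-- The generator σ_s of the Artin monoid. -/
def gen {S : Type*} (M : S → S → ℕ) (s : S) : ArtinMonoid M := (artinCon M).mk' (FreeMonoid.of s)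

/-- Right-divisibility: `a ⪯R b` iff `b = c * a` for some `c`. -/
def RDvd {A : Type*} [Monoid A] (a b : A) : Prop := ∃ c, b = c * a

/-- The parabolic submonoid generated by the generators indexed by `T`. -/
def parabolic {S : Type*} (M : S → S → ℕ) (T : Set S) : Submonoid (ArtinMonoid M) :=
  Submonoid.closure { x | ∃ s ∈ T, x = gen M s }

/-! Both sides of an Artin relation `π(s,t;m) = π(t,s;m)` with `m ≥ 2` use exactly the letters
`s` and `t`, so having the same letters is a congruence on the free monoid that contains the
relations, hence contains the Artin congruence. -/

def letters {S : Type*} (w : FreeMonoid S) : Set S := {s | s ∈ w}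

theorem letters_mul {S : Type*} (v w : FreeMonoid S) :
    letters (v * w) = letters v ∪ letters w :=
  Set.ext fun _ => FreeMonoid.mem_mul

theorem mem_altWord {S : Type*} {s t x : S} {n : ℕ} :
    x ∈ altWord s t n ↔ (x = s ∧ 1 ≤ n) ∨ (x = t ∧ 2 ≤ n) := by
  induction n generalizing s t with
  | zero => simp [altWord, FreeMonoid.notMem_one]
  | succ n ih =>
    simp only [altWord, FreeMonoid.mem_mul, FreeMonoid.mem_of, ih]
    grind

theorem letters_altWord_swap {S : Type*} (s t : S) {n : ℕ} (hn : 2 ≤ n) :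
    letters (altWord s t n) = letters (altWord t s n) := by
  ext x
  simp only [letters, Set.mem_ofPred_eq, mem_altWord]
  grind

def lettersCon (S : Type*) : Con (FreeMonoid S) where
  toSetoid := Setoid.ker letters
  mul' {a b c d} (hab : letters a = letters b) (hcd : letters c = letters d) := by
    show letters (a * c) = letters (b * d)
    rw [letters_mul, letters_mul, hab, hcd]

theorem artinCon_le_lettersCon {S : Type*} {M : S → S → ℕ}
    (hM : ∀ s t, s ≠ t → M s t = 0 ∨ 2 ≤ M s t) : artinCon M ≤ lettersCon S := by
  refine Con.conGen_le.mpr ?_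
  rintro _ _ ⟨s, t, hst, hM0, rfl, rfl⟩
  exact letters_altWord_swap s t ((hM s t hst).resolve_left hM0)

theorem artin_letters_well_defined_general {S : Type*} (M : S → S → ℕ)
    (hM : ∀ s t, s ≠ t → M s t = 0 ∨ 2 ≤ M s t) :
    ∃ L : ArtinMonoid M → Set S,
      ∀ w : FreeMonoid S, L ((artinCon M).mk' w) = {s | s ∈ FreeMonoid.toList w} :=
  ⟨Quotient.lift letters fun _ _ h => artinCon_le_lettersCon hM h, fun _ => rfl⟩

/-- The set of letters appearing in an element of an Artin monoid is
independent of the chosen word representative: there is a well-defined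
"letters" function on the Artin monoid. -/
theorem artin_letters_well_defined {S : Type*} (M : S → S → ℕ)
    (hsym : ∀ s t, M s t = M t s)
    (hM : ∀ s t, s ≠ t → M s t = 0 ∨ 2 ≤ M s t) :
    ∃ L : ArtinMonoid M → Set S,
      ∀ w : FreeMonoid S, L ((artinCon M).mk' w) = {s | s ∈ FreeMonoid.toList w} :=
  artin_letters_well_defined_general M hM

end ArtinStmt
end

section
/- In the positive braid monoid, let a = σ_k σ_{k−1} ⋯ σ_{j+1} with k > j. Then the least common multiple of a and σ_j with respect to right-divisibility is Δ(a, σ_j) = a σ_j a. -/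
namespace ArtinStmt

/-- The Coxeter matrix of type A: m(i,j) = 3 for adjacent indices, 2 otherwise. -/
def braidM : ℕ → ℕ → ℕ := fun i j =>
  if i = j then 1 else if i + 1 = j ∨ j + 1 = i then 3 else 2

/-- The positive braid monoid (type A Artin monoid). -/
abbrev BraidMonoid := ArtinMonoid braidM

/-- The braid generator σ_i. -/
def bσ (i : ℕ) : BraidMonoid := gen braidM i

/-- The descending product σ_k σ_{k-1} ⋯ σ_j (equal to 1 if k < j). -/
def bdesc (k j : ℕ) : BraidMonoid := ((List.range' j (k + 1 - j)).reverse.map bσ).prod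

/-!
Garside's lemma: if `x σ_i = y σ_l` in the positive braid monoid, then `x` and `y` factor
through the right lcm of `σ_i` and `σ_l`, which is `σ_i`, `σ_l σ_i` or `σ_i σ_l σ_i` according
as `i = l`, `|i - l| ≥ 2` or `|i - l| = 1`. It is proved by induction on the length of `x`,
following a chain of elementary rewrites from a word for `x σ_i` to one for `y σ_l`; only the
rewrites that touch the last letter need work, a short case analysis on the three generators
involved. Garside's lemma gives right cancellation and the right lcms of pairs of generators.

For `a = σ_{j+n} ⋯ σ_{j+1}` we then induct on `n`. Put `a' = σ_{j+n+1} a` and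
`a σ_j = σ_{j+n} D` with `D = σ_{j+n-1} ⋯ σ_j`, whose letters commute with `σ_{j+n+1}`.
Since `a ⪯R a'`, `lcm(a', σ_j) = lcm(a', a σ_j a) = lcm(σ_{j+n+1}, σ_{j+n} D) a
= σ_{j+n} σ_{j+n+1} σ_{j+n} D a`, and a braid computation identifies this with `a' σ_j a'`.
-/

open Relation

section Rewriting

variable {M : Type*} [Monoid M] {r : M → M → Prop}

def Rewrite (r : M → M → Prop) (x y : M) : Prop :=
  ∃ p u v q, SymmGen r u v ∧ x = p * u * q ∧ y = p * v * q

theorem Rewrite.symm {x y : M} (h : Rewrite r x y) : Rewrite r y x := by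
  obtain ⟨p, u, v, q, huv, rfl, rfl⟩ := h
  exact ⟨p, v, u, q, huv.symm, rfl, rfl⟩

theorem Rewrite.mul_mul {x y : M} (a b : M) (h : Rewrite r x y) :
    Rewrite r (a * x * b) (a * y * b) := by
  obtain ⟨p, u, v, q, huv, rfl, rfl⟩ := h
  exact ⟨a * p, u, v, q * b, huv, by simp only [mul_assoc], by simp only [mul_assoc]⟩

theorem reflTransGen_rewrite_of_conGen {x y : M} (h : conGen r x y) :
    ReflTransGen (Rewrite r) x y := by
  induction h with
  | of u v huv => exact .single ⟨1, u, v, 1, .of_rel huv, by simp, by simp⟩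
  | refl => exact .refl
  | symm _ ih => exact reflTransGen_swap.1 (ih.lift id fun _ _ h => h.symm)
  | trans _ _ ih₁ ih₂ => exact ih₁.trans ih₂
  | mul _ _ ih₁ ih₂ =>
    exact (ih₁.lift (· * _) fun _ _ h => by simpa using h.mul_mul 1 _).trans
      (ih₂.lift (_ * ·) fun _ _ h => by simpa using h.mul_mul _ 1)

end Rewriting

section Length

variable {S : Type*} {M : S → S → ℕ}

theorem length_altWord (s t : S) (n : ℕ) : (altWord s t n).length = n := by
  induction n generalizing s t with
  | zero => rfl
  | succ n ih => simp [altWord, FreeMonoid.length_mul, ih, add_comm]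

theorem artinRel_length_eq {u v : FreeMonoid S} : artinRel M u v → u.length = v.length
  | ⟨_, _, _, _, hu, hv⟩ => by rw [hu, hv, length_altWord, length_altWord]

theorem Rewrite.length_eq {u v : FreeMonoid S} : Rewrite (artinRel M) u v → u.length = v.length
  | ⟨_, _, _, _, huv, hu, hv⟩ => by
    have huv' := huv.elim artinRel_length_eq fun h => (artinRel_length_eq h).symm
    rw [hu, hv]
    simp only [FreeMonoid.length_mul, huv']

def wordLength (S : Type*) : FreeMonoid S →* Multiplicative ℕ where
  toFun w := .ofAdd w.length
  map_one' := rfl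
  map_mul' x y := congrArg Multiplicative.ofAdd (FreeMonoid.length_mul x y)

def ArtinMonoid.length (x : ArtinMonoid M) : ℕ :=
  ((artinCon M).lift (wordLength S)
    (Con.conGen_le.2 fun _ _ h => congrArg Multiplicative.ofAdd (artinRel_length_eq h)) x).toAdd

@[simp]
theorem ArtinMonoid.length_coe (w : FreeMonoid S) : length (w : ArtinMonoid M) = w.length := rfl

@[simp]
theorem ArtinMonoid.length_mul (x y : ArtinMonoid M) : length (x * y) = length x + length y := by
  unfold length; rw [map_mul]; rfl

@[simp]
theorem ArtinMonoid.length_gen (s : S) : length (gen M s) = 1 := rfl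

end Length

section RightLcm

variable {A : Type*} [Monoid A]

theorem RDvd.refl (a : A) : RDvd a a := ⟨1, (one_mul a).symm⟩

theorem rdvd_mul_left (a b : A) : RDvd a (b * a) := ⟨b, rfl⟩

theorem RDvd.trans {a b c : A} : RDvd a b → RDvd b c → RDvd a c
  | ⟨x, hx⟩, ⟨y, hy⟩ => ⟨y * x, by rw [hy, hx, mul_assoc]⟩

theorem RDvd.mul_right {a b : A} (c : A) : RDvd a b → RDvd (a * c) (b * c)
  | ⟨x, hx⟩ => ⟨x, by rw [hx, mul_assoc]⟩

theorem RDvd.of_mul_right [IsRightCancelMul A] {a b c : A} : RDvd (a * c) (b * c) → RDvd a b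
  | ⟨x, hx⟩ => ⟨x, mul_right_cancel (by rw [hx, mul_assoc])⟩

def IsRightLcm (a b m : A) : Prop :=
  RDvd a m ∧ RDvd b m ∧ ∀ x, RDvd a x → RDvd b x → RDvd m x

theorem isRightLcm_one_left (b : A) : IsRightLcm 1 b b :=
  ⟨⟨b, (mul_one b).symm⟩, .refl b, fun _ _ h => h⟩

theorem IsRightLcm.symm {a b m : A} (h : IsRightLcm a b m) : IsRightLcm b a m :=
  ⟨h.2.1, h.1, fun x ha hb => h.2.2 x hb ha⟩

theorem IsRightLcm.mul_right [IsRightCancelMul A] {a b m : A} (h : IsRightLcm a b m) (c : A) :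
    IsRightLcm (a * c) (b * c) (m * c) := by
  refine ⟨h.1.mul_right c, h.2.1.mul_right c, fun x hax hbx => ?_⟩
  obtain ⟨y, rfl⟩ := (rdvd_mul_left c a).trans hax
  exact (h.2.2 y hax.of_mul_right hbx.of_mul_right).mul_right c

/-- `lcm(d, b) = lcm(d, lcm(a, b))` whenever `a ⪯R d`. -/
theorem IsRightLcm.of_rdvd {a b m d e : A} (h : IsRightLcm a b m) (had : RDvd a d)
    (he : IsRightLcm d m e) : IsRightLcm d b e :=
  ⟨he.1, h.2.1.trans he.2.1, fun x hdx hbx => he.2.2 x hdx (h.2.2 x (had.trans hdx) hbx)⟩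

end RightLcm

section FreeMonoid

open FreeMonoid

variable {α : Type*}

theorem eq_and_eq_of_mul_of_eq_mul_of {X Y : FreeMonoid α} {i l : α} (h : X * of i = Y * of l) :
    X = Y ∧ i = l := by
  obtain ⟨hXY, hil⟩ := List.append_inj' (congrArg toList h) rfl
  exact ⟨toList.injective hXY, List.singleton_inj.1 hil⟩

theorem eq_one_or_exists_eq_mul_of (q : FreeMonoid α) : q = 1 ∨ ∃ q₁ a, q = q₁ * of a := by
  rcases List.eq_nil_or_concat (toList q) with h | ⟨q₁, a, h⟩
  · exact .inl (toList.injective h)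
  · exact .inr ⟨ofList q₁, a, toList.injective (by simp [h, toList_mul, toList_of])⟩

end FreeMonoid

namespace Braid

open ArtinMonoid

def Adj (a b : ℕ) : Prop := a + 1 = b ∨ b + 1 = a

def Far (a b : ℕ) : Prop := a + 2 ≤ b ∨ b + 2 ≤ a

instance : DecidableRel Adj := fun _ _ => inferInstanceAs (Decidable (_ ∨ _))

theorem Adj.symm {a b : ℕ} (h : Adj a b) : Adj b a := Or.symm h

theorem Far.symm {a b : ℕ} (h : Far a b) : Far b a := Or.symm h

theorem eq_or_adj_or_far (a b : ℕ) : a = b ∨ Adj a b ∨ Far a b := by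
  unfold Adj Far; omega

theorem braidM_of_adj {a b : ℕ} (h : Adj a b) : braidM a b = 3 := by
  unfold Adj at h; unfold braidM; split_ifs <;> omega

theorem braidM_of_far {a b : ℕ} (h : Far a b) : braidM a b = 2 := by
  unfold Far at h; unfold braidM; split_ifs <;> omega

@[simp]
theorem coe_of (i : ℕ) : ((FreeMonoid.of i : FreeMonoid ℕ) : BraidMonoid) = bσ i := rfl

theorem mk_eq_of_symmGen {u v : FreeMonoid ℕ} (h : SymmGen (artinRel braidM) u v) :
    (u : BraidMonoid) = v :=
  (Con.eq _).2 <| h.elim (ConGen.Rel.of _ _) fun h => (ConGen.Rel.of _ _ h).symm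

theorem bσ_braid {a b : ℕ} (h : Adj a b) : bσ a * (bσ b * bσ a) = bσ b * (bσ a * bσ b) := by
  have hab : a ≠ b := by unfold Adj at h; omega
  simpa [altWord, braidM_of_adj h] using
    mk_eq_of_symmGen (.of_rel ⟨a, b, hab, by simp [braidM_of_adj h], rfl, rfl⟩)

theorem bσ_commute {a b : ℕ} (h : Far a b) : Commute (bσ a) (bσ b) := by
  have hab : a ≠ b := by unfold Far at h; omega
  simpa [altWord, braidM_of_far h, commute_iff_eq] using
    mk_eq_of_symmGen (.of_rel ⟨a, b, hab, by simp [braidM_of_far h], rfl, rfl⟩)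

theorem bσ_braid_assoc {a b : ℕ} (h : Adj a b) (w : BraidMonoid) :
    bσ a * (bσ b * (bσ a * w)) = bσ b * (bσ a * (bσ b * w)) := by
  simp only [← mul_assoc]; rw [mul_assoc (bσ a), bσ_braid h, ← mul_assoc]

@[simp]
theorem length_bσ (i : ℕ) : ArtinMonoid.length (bσ i) = 1 := ArtinMonoid.length_gen i

/-- `cofactor l i * bσ i` is the right lcm of `bσ i` and `bσ l`. -/
def cofactor (l i : ℕ) : BraidMonoid :=
  if i = l then 1 else if Adj i l then bσ i * bσ l else bσ l

theorem cofactor_self (i : ℕ) : cofactor i i = 1 := if_pos rfl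

theorem cofactor_of_adj {i l : ℕ} (h : Adj i l) : cofactor l i = bσ i * bσ l := by
  have : i ≠ l := by unfold Adj at h; omega
  rw [cofactor, if_neg this, if_pos h]

theorem cofactor_of_far {i l : ℕ} (h : Far i l) : cofactor l i = bσ l := by
  have : i ≠ l ∧ ¬Adj i l := by unfold Far at h; unfold Adj; omega
  rw [cofactor, if_neg this.1, if_neg this.2]

theorem cofactor_commute {a i l : ℕ} (hai : Far a i) (hal : Far a l) :
    Commute (cofactor l i) (bσ a) := by
  rcases eq_or_adj_or_far i l with rfl | h | h
  · rw [cofactor_self]; exact Commute.one_left _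
  · rw [cofactor_of_adj h]
    exact ((bσ_commute hai).symm.mul_left (bσ_commute hal).symm)
  · rw [cofactor_of_far h]; exact (bσ_commute hal).symm

/-- Garside's lemma, for left factors of length `< L`. -/
def GarsideProperty (L : ℕ) : Prop :=
  ∀ x y : BraidMonoid, ∀ i l : ℕ, length x < L → x * bσ i = y * bσ l →
    ∃ z, x = z * cofactor l i ∧ y = z * cofactor i l

namespace GarsideProperty

variable {L : ℕ} {P Z y : BraidMonoid} {a b i l : ℕ}

/- The inductive step of Garside's lemma for a rewrite at the end of a word: the factorisation
known for `P σ_i σ_a` (last letter `σ_a`) is transferred to `P σ_a σ_i`, and in `transfer_adj`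
from `P σ_b σ_a σ_b` to `P σ_a σ_b σ_a`. -/

theorem transfer_far_of_adj (G : GarsideProperty L) (hai : Far a i) (hal : Adj a l)
    (hP : length P < L) (h₁ : P * bσ i = Z * (bσ a * bσ l)) (h₂ : y = Z * (bσ l * bσ a)) :
    ∃ Z', P * bσ a = Z' * cofactor l i ∧ y = Z' * cofactor i l := by
  have hZ : length P + 1 = length Z + 2 := by simpa using congrArg length h₁
  obtain ⟨Z₂, k₁, k₂⟩ := G P (Z * bσ a) i l hP (by rw [h₁, mul_assoc])
  rcases eq_or_adj_or_far i l with rfl | hil | hil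
  · unfold Far at hai; unfold Adj at hal; omega
  · rw [cofactor_of_adj hil] at k₁
    rw [cofactor_of_adj hil.symm] at k₂
    have hZ₂ : length P = length Z₂ + 2 := by simpa using congrArg length k₁
    obtain ⟨Z₃, m₁, m₂⟩ := G Z (Z₂ * bσ l) a i (by omega) (by rw [k₂, mul_assoc])
    rw [cofactor_of_far hai] at m₁
    rw [cofactor_of_far hai.symm] at m₂
    obtain ⟨Z₄, n₁, n₂⟩ := G Z₂ Z₃ l a (by omega) m₂
    rw [cofactor_of_adj hal.symm] at n₁
    rw [cofactor_of_adj hal] at n₂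
    refine ⟨Z₄ * (bσ i * (bσ l * bσ a)), ?_, ?_⟩
    · calc P * bσ a = Z₄ * (bσ l * (bσ a * (bσ i * (bσ l * bσ a)))) := by
            rw [k₁, n₁]; simp only [mul_assoc]
        _ = Z₄ * (bσ l * (bσ i * (bσ l * (bσ a * bσ l)))) := by
            rw [(bσ_commute hai).left_comm, bσ_braid hal]
        _ = Z₄ * (bσ i * (bσ l * bσ a)) * cofactor l i := by
            rw [bσ_braid_assoc hil.symm, (bσ_commute hai.symm).left_comm, cofactor_of_adj hil]
            simp only [mul_assoc]
    · calc y = Z₄ * (bσ a * (bσ l * (bσ i * (bσ l * bσ a)))) := by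
            rw [h₂, m₁, n₂]; simp only [mul_assoc]
        _ = Z₄ * (bσ i * (bσ a * (bσ l * (bσ a * bσ i)))) := by
            rw [bσ_braid_assoc hil.symm, (bσ_commute hai).left_comm, (bσ_commute hai.symm).eq]
        _ = Z₄ * (bσ i * (bσ l * bσ a)) * cofactor i l := by
            rw [bσ_braid_assoc hal, cofactor_of_adj hil.symm]; simp only [mul_assoc]
  · rw [cofactor_of_far hil] at k₁
    rw [cofactor_of_far hil.symm] at k₂
    obtain ⟨Z₃, m₁, m₂⟩ := G Z Z₂ a i (by omega) k₂
    rw [cofactor_of_far hai] at m₁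
    rw [cofactor_of_far hai.symm] at m₂
    refine ⟨Z₃ * (bσ l * bσ a), ?_, ?_⟩
    · calc P * bσ a = Z₃ * (bσ a * (bσ l * bσ a)) := by rw [k₁, m₂]; simp only [mul_assoc]
        _ = Z₃ * (bσ l * bσ a) * cofactor l i := by
            rw [bσ_braid hal, cofactor_of_far hil]; simp only [mul_assoc]
    · calc y = Z₃ * (bσ i * (bσ l * bσ a)) := by rw [h₂, m₁]; simp only [mul_assoc]
        _ = Z₃ * (bσ l * bσ a) * cofactor i l := by
            rw [(bσ_commute hil).left_comm, (bσ_commute hai.symm).eq, cofactor_of_far hil.symm]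
            simp only [mul_assoc]

theorem transfer_far (G : GarsideProperty L) (hai : Far a i) (hP : length P < L)
    (h₁ : P * bσ i = Z * cofactor l a) (h₂ : y = Z * cofactor a l) :
    ∃ Z', P * bσ a = Z' * cofactor l i ∧ y = Z' * cofactor i l := by
  rcases eq_or_adj_or_far a l with rfl | hal | hal
  · rw [cofactor_self, mul_one] at h₁ h₂
    exact ⟨P, by rw [cofactor_of_far hai.symm], by rw [cofactor_of_far hai, h₂, h₁]⟩
  · rw [cofactor_of_adj hal] at h₁
    rw [cofactor_of_adj hal.symm] at h₂
    exact G.transfer_far_of_adj hai hal hP h₁ h₂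
  · rw [cofactor_of_far hal] at h₁
    rw [cofactor_of_far hal.symm] at h₂
    obtain ⟨Z₂, k₁, k₂⟩ := G P Z i l hP h₁
    refine ⟨Z₂ * bσ a, ?_, ?_⟩
    · rw [k₁, mul_assoc, (cofactor_commute hai hal).eq, ← mul_assoc]
    · rw [h₂, k₂, mul_assoc, (cofactor_commute hal hai).eq, ← mul_assoc]

theorem transfer_adj_of_adj_of_far (G : GarsideProperty L) (hab : Adj a b) (hbl : Adj b l)
    (hal : Far a l) (hP : length P + 1 < L) (h₁ : P * bσ b * bσ a = Z * (bσ b * bσ l))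
    (h₂ : y = Z * (bσ l * bσ b)) :
    ∃ Z', P * (bσ a * bσ b) = Z' * cofactor l a ∧ y = Z' * cofactor a l := by
  have hZ : length P = length Z := by simpa using congrArg length h₁
  obtain ⟨Z₂, k₁, k₂⟩ := G (P * bσ b) (Z * bσ b) a l (by simpa using hP)
    (by rw [h₁]; simp only [mul_assoc])
  rw [cofactor_of_far hal] at k₁
  rw [cofactor_of_far hal.symm] at k₂
  have hZ₂ : length P = length Z₂ := by simpa using congrArg length k₁
  obtain ⟨Z₃, m₁, m₂⟩ := G P Z₂ b l (by omega) k₁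
  rw [cofactor_of_adj hbl] at m₁
  rw [cofactor_of_adj hbl.symm] at m₂
  obtain ⟨Z₄, n₁, n₂⟩ := G Z Z₂ b a (by omega) k₂
  rw [cofactor_of_adj hab.symm] at n₁
  rw [cofactor_of_adj hab] at n₂
  have hZ₃ : length Z₃ + 2 = length P := by simpa using (congrArg length m₁).symm
  obtain ⟨Zq, q₁, q₂⟩ := G (Z₃ * bσ l) (Z₄ * bσ a) b b (by simp; omega)
    (by rw [mul_assoc, ← m₂, mul_assoc, ← n₂])
  rw [cofactor_self, mul_one] at q₁ q₂
  obtain ⟨Z₅, r₁, r₂⟩ := G Z₃ Z₄ l a (by omega) (by rw [q₁, q₂])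
  rw [cofactor_of_far hal.symm] at r₁
  rw [cofactor_of_far hal] at r₂
  refine ⟨Z₅ * (bσ b * (bσ a * (bσ l * bσ b))), ?_, ?_⟩
  · calc P * (bσ a * bσ b) = Z₅ * (bσ a * (bσ b * (bσ l * (bσ a * bσ b)))) := by
          rw [m₁, r₁]; simp only [mul_assoc]
      _ = Z₅ * (bσ b * (bσ a * (bσ b * (bσ l * bσ b)))) := by
          rw [(bσ_commute hal.symm).left_comm, bσ_braid_assoc hab]
      _ = Z₅ * (bσ b * (bσ a * (bσ l * bσ b))) * cofactor l a := by
          rw [bσ_braid hbl, cofactor_of_far hal]; simp only [mul_assoc]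
  · calc y = Z₅ * (bσ l * (bσ b * (bσ a * (bσ l * bσ b)))) := by
          rw [h₂, n₁, r₂]; simp only [mul_assoc]
      _ = Z₅ * (bσ b * (bσ l * (bσ a * (bσ b * bσ a)))) := by
          rw [(bσ_commute hal).left_comm, bσ_braid_assoc hbl.symm, bσ_braid hab.symm]
      _ = Z₅ * (bσ b * (bσ a * (bσ l * bσ b))) * cofactor a l := by
          rw [(bσ_commute hal.symm).left_comm, cofactor_of_far hal.symm]; simp only [mul_assoc]

theorem transfer_adj_of_far (G : GarsideProperty L) (hab : Adj a b) (hbl : Far b l)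
    (hP : length P + 1 < L) (h₁ : P * bσ b * bσ a = Z * bσ l) (h₂ : y = Z * bσ b) :
    ∃ Z', P * (bσ a * bσ b) = Z' * cofactor l a ∧ y = Z' * cofactor a l := by
  obtain ⟨Z₂, k₁, k₂⟩ := G (P * bσ b) Z a l (by simpa using hP) h₁
  rcases eq_or_adj_or_far a l with rfl | hal | hal
  · unfold Adj at hab; unfold Far at hbl; omega
  · rw [cofactor_of_adj hal] at k₁
    rw [cofactor_of_adj hal.symm] at k₂
    obtain ⟨Z₃, m₁, m₂⟩ := G P (Z₂ * bσ a) b l (by omega) (by rw [k₁]; simp only [mul_assoc])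
    rw [cofactor_of_far hbl] at m₁
    rw [cofactor_of_far hbl.symm] at m₂
    have hZ₂ : length Z₂ + 1 = length P := by
      simpa using (congrArg length m₂).trans (by simpa using congrArg length m₁.symm)
    obtain ⟨Z₄, n₁, n₂⟩ := G Z₂ Z₃ a b (by omega) m₂
    rw [cofactor_of_adj hab] at n₁
    rw [cofactor_of_adj hab.symm] at n₂
    refine ⟨Z₄ * (bσ l * (bσ a * bσ b)), ?_, ?_⟩
    · calc P * (bσ a * bσ b) = Z₄ * (bσ b * (bσ a * (bσ l * (bσ a * bσ b)))) := by
            rw [m₁, n₂]; simp only [mul_assoc]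
        _ = Z₄ * (bσ l * (bσ b * (bσ a * (bσ b * bσ l)))) := by
            rw [bσ_braid_assoc hal, (bσ_commute hbl.symm).left_comm, (bσ_commute hbl).eq]
        _ = Z₄ * (bσ l * (bσ a * bσ b)) * cofactor l a := by
            rw [bσ_braid_assoc hab.symm, cofactor_of_adj hal]; simp only [mul_assoc]
    · calc y = Z₄ * (bσ a * (bσ b * (bσ l * (bσ a * bσ b)))) := by
            rw [h₂, k₂, n₁]; simp only [mul_assoc]
        _ = Z₄ * (bσ l * (bσ a * (bσ l * (bσ b * bσ a)))) := by
            rw [(bσ_commute hbl).left_comm, ← bσ_braid hab, bσ_braid_assoc hal]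
        _ = Z₄ * (bσ l * (bσ a * bσ b)) * cofactor a l := by
            rw [(bσ_commute hbl.symm).left_comm, cofactor_of_adj hal.symm]; simp only [mul_assoc]
  · rw [cofactor_of_far hal] at k₁
    rw [cofactor_of_far hal.symm] at k₂
    have hZ₂ : length P = length Z₂ := by simpa using congrArg length k₁
    obtain ⟨Z₃, m₁, m₂⟩ := G P Z₂ b l (by omega) k₁
    rw [cofactor_of_far hbl] at m₁
    rw [cofactor_of_far hbl.symm] at m₂
    refine ⟨Z₃ * (bσ a * bσ b), ?_, ?_⟩
    · calc P * (bσ a * bσ b) = Z₃ * (bσ l * (bσ a * bσ b)) := by rw [m₁]; simp only [mul_assoc]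
        _ = Z₃ * (bσ a * bσ b) * cofactor l a := by
            rw [(bσ_commute hal.symm).left_comm, (bσ_commute hbl.symm).eq, cofactor_of_far hal]
            simp only [mul_assoc]
    · calc y = Z₃ * (bσ b * (bσ a * bσ b)) := by rw [h₂, k₂, m₂]; simp only [mul_assoc]
        _ = Z₃ * (bσ a * bσ b) * cofactor a l := by
            rw [bσ_braid hab.symm, cofactor_of_far hal.symm]; simp only [mul_assoc]

theorem transfer_adj (G : GarsideProperty L) (hab : Adj a b) (hP : length P + 1 < L)
    (h₁ : P * bσ b * bσ a = Z * cofactor l b) (h₂ : y = Z * cofactor b l) :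
    ∃ Z', P * (bσ a * bσ b) = Z' * cofactor l a ∧ y = Z' * cofactor a l := by
  rcases eq_or_adj_or_far b l with rfl | hbl | hbl
  · rw [cofactor_self, mul_one] at h₁ h₂
    exact ⟨P, by rw [cofactor_of_adj hab, ← mul_assoc],
      by rw [cofactor_of_adj hab.symm, h₂, ← h₁, mul_assoc]⟩
  · rw [cofactor_of_adj hbl] at h₁
    rw [cofactor_of_adj hbl.symm] at h₂
    rcases eq_or_adj_or_far a l with rfl | hal | hal
    · have hZ : length P = length Z := by simpa using congrArg length h₁
      obtain ⟨Z₂, k₁, k₂⟩ := G (P * bσ b) (Z * bσ b) a a (by simpa using hP)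
        (by rw [h₁]; simp only [mul_assoc])
      rw [cofactor_self, mul_one] at k₁ k₂
      obtain ⟨Z₃, m₁, m₂⟩ := G P Z b b (by omega) (by rw [k₁, k₂])
      rw [cofactor_self, mul_one] at m₁ m₂
      exact ⟨P * (bσ a * bσ b), by rw [cofactor_self, mul_one],
        by rw [cofactor_self, mul_one, h₂, m₂, ← m₁]⟩
    · unfold Adj at hab hbl hal; omega
    · exact G.transfer_adj_of_adj_of_far hab hbl hal hP h₁ h₂
  · rw [cofactor_of_far hbl] at h₁
    rw [cofactor_of_far hbl.symm] at h₂
    exact G.transfer_adj_of_far hab hbl hP h₁ h₂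

end GarsideProperty

section Words

open FreeMonoid

theorem symmGen_artinRel_cases {u v : FreeMonoid ℕ} (h : SymmGen (artinRel braidM) u v) :
    (∃ s t, Far s t ∧ u = of s * of t ∧ v = of t * of s) ∨
    (∃ s t, Adj s t ∧ u = of s * of t * of s ∧ v = of t * of s * of t) := by
  wlog huv : artinRel braidM u v
  · rcases this h.symm (h.resolve_left huv) with ⟨s, t, hst, rfl, rfl⟩ | ⟨s, t, hst, rfl, rfl⟩
    exacts [.inl ⟨t, s, hst.symm, rfl, rfl⟩, .inr ⟨t, s, hst.symm, rfl, rfl⟩]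
  obtain ⟨s, t, hne, -, rfl, rfl⟩ := huv
  rcases eq_or_adj_or_far s t with rfl | hst | hst
  · exact absurd rfl hne
  · exact .inr ⟨s, t, hst, by simp [altWord, braidM_of_adj hst, mul_assoc]⟩
  · exact .inl ⟨s, t, hst, by simp [altWord, braidM_of_far hst]⟩

/-- The invariant carried along a chain of rewrites from `W` to `Y * of l`. -/
def FactorsAt (Y : FreeMonoid ℕ) (l : ℕ) (W : FreeMonoid ℕ) : Prop :=
  ∀ (X : FreeMonoid ℕ) i, W = X * of i →
    ∃ Z, (X : BraidMonoid) = Z * cofactor l i ∧ (Y : BraidMonoid) = Z * cofactor i l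

theorem factorsAt_self (Y : FreeMonoid ℕ) (l : ℕ) : FactorsAt Y l (Y * of l) := by
  intro X i h
  obtain ⟨rfl, rfl⟩ := eq_and_eq_of_mul_of_eq_mul_of h.symm
  exact ⟨X, by rw [cofactor_self, mul_one], by rw [cofactor_self, mul_one]⟩

namespace GarsideProperty

variable {L : ℕ} {Y p : FreeMonoid ℕ} {l s t : ℕ}

theorem factorsAt_of_far_swap (G : GarsideProperty L) (hst : Far s t)
    (hp : p.length + 2 ≤ L + 1) (h : FactorsAt Y l (p * of t * of s)) :
    FactorsAt Y l (p * of s * of t) := by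
  intro X i hX
  obtain ⟨rfl, rfl⟩ := eq_and_eq_of_mul_of_eq_mul_of hX
  obtain ⟨Z, hZ₁, hZ₂⟩ := h (p * of t) s rfl
  obtain ⟨Z', h₁, h₂⟩ := G.transfer_far (P := p) hst (by simp; omega) (by simpa using hZ₁) hZ₂
  exact ⟨Z', by simpa using h₁, h₂⟩

theorem factorsAt_of_adj_swap (G : GarsideProperty L) (hst : Adj s t)
    (hp : p.length + 3 ≤ L + 1) (h : FactorsAt Y l (p * of t * of s * of t)) :
    FactorsAt Y l (p * of s * of t * of s) := by
  intro X i hX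
  obtain ⟨rfl, rfl⟩ := eq_and_eq_of_mul_of_eq_mul_of hX
  obtain ⟨Z, hZ₁, hZ₂⟩ := h (p * of t * of s) t rfl
  obtain ⟨Z', h₁, h₂⟩ := G.transfer_adj (P := p) hst (by simp; omega) (by simpa using hZ₁) hZ₂
  exact ⟨Z', by simpa [mul_assoc] using h₁, h₂⟩

theorem factorsAt_of_rewrite (G : GarsideProperty L) {W W₁ : FreeMonoid ℕ}
    (h : Rewrite (artinRel braidM) W W₁) (hW : W.length ≤ L + 1) (h₁ : FactorsAt Y l W₁) :
    FactorsAt Y l W := by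
  obtain ⟨p, u, v, q, huv, rfl, rfl⟩ := h
  rcases eq_one_or_exists_eq_mul_of q with rfl | ⟨q, a, rfl⟩
  · simp only [mul_one] at hW h₁ ⊢
    rcases symmGen_artinRel_cases huv with ⟨s, t, hst, rfl, rfl⟩ | ⟨s, t, hst, rfl, rfl⟩
    · rw [← mul_assoc] at h₁ ⊢
      exact G.factorsAt_of_far_swap hst (by simpa using hW) h₁
    · simp only [← mul_assoc] at h₁ ⊢
      exact G.factorsAt_of_adj_swap hst (by simpa using hW) h₁
  · intro X i hX
    have hX' : p * u * q * of a = X * of i := by rw [← hX]; simp only [mul_assoc]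
    obtain ⟨rfl, rfl⟩ := eq_and_eq_of_mul_of_eq_mul_of hX'
    obtain ⟨Z, hZ₁, hZ₂⟩ := h₁ (p * v * q) a (by simp only [mul_assoc])
    exact ⟨Z, by simpa [mk_eq_of_symmGen huv] using hZ₁, hZ₂⟩

theorem factorsAt_of_reflTransGen (G : GarsideProperty L) {W : FreeMonoid ℕ}
    (h : ReflTransGen (Rewrite (artinRel braidM)) W (Y * of l)) (hW : W.length ≤ L + 1) :
    FactorsAt Y l W := by
  induction h using ReflTransGen.head_induction_on with
  | refl => exact factorsAt_self Y l
  | head hstep _ ih => exact G.factorsAt_of_rewrite hstep hW (ih (hstep.length_eq ▸ hW))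

theorem succ (G : GarsideProperty L) : GarsideProperty (L + 1) := by
  intro x y i l hx hxy
  obtain ⟨X, rfl⟩ := Con.mk'_surjective x
  obtain ⟨Y, rfl⟩ := Con.mk'_surjective y
  have hXY : ((X * of i : FreeMonoid ℕ) : BraidMonoid) = Y * of l := by simpa using hxy
  have hchain : ReflTransGen (Rewrite (artinRel braidM)) (X * of i) (Y * of l) :=
    reflTransGen_rewrite_of_conGen ((Con.eq _).1 hXY)
  exact G.factorsAt_of_reflTransGen hchain (by simpa using hx) X i rfl

end GarsideProperty

theorem garsideProperty (L : ℕ) : GarsideProperty L := by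
  induction L with
  | zero => intro _ _ _ _ hx; exact absurd hx (Nat.not_lt_zero _)
  | succ L ih => exact ih.succ

end Words

theorem exists_eq_mul_cofactor {x y : BraidMonoid} {i l : ℕ} (h : x * bσ i = y * bσ l) :
    ∃ z, x = z * cofactor l i ∧ y = z * cofactor i l :=
  garsideProperty (length x + 1) x y i l (Nat.lt_succ_self _) h

theorem isRightRegular_bσ (i : ℕ) : IsRightRegular (bσ i) := fun x y h => by
  obtain ⟨z, rfl, rfl⟩ := exists_eq_mul_cofactor h
  rfl

instance : IsRightCancelMul BraidMonoid where
  mul_right_cancel x := by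
    induction x using Con.induction_on with
    | H w =>
      induction w using FreeMonoid.inductionOn' with
      | one => exact isRegular_one.right
      | of_mul i w ih => simpa using (isRightRegular_bσ i).mul ih

theorem cofactor_mul_bσ_comm (i l : ℕ) : cofactor l i * bσ i = cofactor i l * bσ l := by
  rcases eq_or_adj_or_far i l with rfl | h | h
  · rfl
  · rw [cofactor_of_adj h, cofactor_of_adj h.symm, mul_assoc, mul_assoc, bσ_braid h]
  · rw [cofactor_of_far h, cofactor_of_far h.symm, (bσ_commute h).eq]

theorem isRightLcm_bσ (i l : ℕ) : IsRightLcm (bσ i) (bσ l) (cofactor l i * bσ i) := by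
  refine ⟨rdvd_mul_left _ _, cofactor_mul_bσ_comm i l ▸ rdvd_mul_left _ _, ?_⟩
  rintro x ⟨u, rfl⟩ ⟨v, hv⟩
  obtain ⟨z, rfl, -⟩ := exists_eq_mul_cofactor hv
  exact ⟨z, mul_assoc _ _ _⟩

theorem isRightLcm_bσ_of_far {i l : ℕ} (h : Far i l) :
    IsRightLcm (bσ i) (bσ l) (bσ l * bσ i) := by
  simpa only [cofactor_of_far h] using isRightLcm_bσ i l

theorem isRightLcm_bσ_of_adj {i l : ℕ} (h : Adj i l) :
    IsRightLcm (bσ i) (bσ l) (bσ i * bσ l * bσ i) := by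
  simpa only [cofactor_of_adj h] using isRightLcm_bσ i l

/-- `descRun j n = σ_{j+n-1} ⋯ σ_{j+1} σ_j`, and `descRun j 0 = 1`. -/
def descRun (j n : ℕ) : BraidMonoid := ((List.range' j n).reverse.map bσ).prod

theorem descRun_zero (j : ℕ) : descRun j 0 = 1 := rfl

theorem descRun_succ (j n : ℕ) : descRun j (n + 1) = bσ (j + n) * descRun j n := by
  simp [descRun, List.range'_1_concat]

theorem descRun_succ' (j n : ℕ) : descRun j (n + 1) = descRun (j + 1) n * bσ j := by
  simp [descRun, List.range'_succ]

theorem bdesc_eq_descRun (k j : ℕ) : bdesc k (j + 1) = descRun (j + 1) (k - j) := by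
  rw [bdesc, descRun, Nat.add_sub_add_right]

theorem bσ_commute_descRun {t j n : ℕ} (h : j + n < t) : Commute (bσ t) (descRun j n) := by
  induction n with
  | zero => exact Commute.one_right _
  | succ n ih =>
    rw [descRun_succ]
    exact (bσ_commute (Or.inr (by omega))).mul_right (ih (by omega))

theorem isRightLcm_bσ_descRun {t j n : ℕ} (h : j + n < t) :
    IsRightLcm (bσ t) (descRun j n) (bσ t * descRun j n) := by
  induction n with
  | zero => simpa [descRun_zero] using (isRightLcm_one_left (bσ t)).symm
  | succ n ih =>
    have hfar := (isRightLcm_bσ_of_far (Or.inl (by omega) : Far (j + n) t)).mul_right (descRun j n)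
    rw [descRun_succ]
    exact ((ih (by omega)).symm.of_rdvd (rdvd_mul_left _ _)
      (by simpa only [mul_assoc] using hfar)).symm

theorem isRightLcm_bσ_succ_bσ_mul_descRun {t j n : ℕ} (h : j + n ≤ t) :
    IsRightLcm (bσ (t + 1)) (bσ t * descRun j n) (bσ t * bσ (t + 1) * bσ t * descRun j n) := by
  have hadj := (isRightLcm_bσ_of_adj (Or.inl rfl : Adj t (t + 1))).mul_right (descRun j n)
  exact ((isRightLcm_bσ_descRun (by omega : j + n < t + 1)).symm.of_rdvd (rdvd_mul_left _ _)
    (by simpa only [mul_assoc] using hadj)).symm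

theorem descRun_succ_of_succ (j n : ℕ) :
    descRun (j + 1) (n + 1) = bσ (j + n + 1) * descRun (j + 1) n := by
  rw [descRun_succ, Nat.add_right_comm]

theorem descRun_succ_mul_bσ (j n : ℕ) : descRun (j + 1) n * bσ j = bσ (j + n) * descRun j n := by
  rw [← descRun_succ', descRun_succ]

theorem descRun_succ_mul_bσ_mul_descRun_succ (j n : ℕ) :
    descRun (j + 1) (n + 1) * bσ j * descRun (j + 1) (n + 1) =
      bσ (j + n) * bσ (j + n + 1) * bσ (j + n) * descRun j n * descRun (j + 1) n := by
  have hcomm := bσ_commute_descRun (by omega : j + n < j + n + 1)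
  calc descRun (j + 1) (n + 1) * bσ j * descRun (j + 1) (n + 1)
      = bσ (j + n + 1) * (descRun (j + 1) n * bσ j) * (bσ (j + n + 1) * descRun (j + 1) n) := by
        rw [descRun_succ_of_succ]; simp only [mul_assoc]
    _ = bσ (j + n + 1) * (bσ (j + n) * (descRun j n * bσ (j + n + 1))) * descRun (j + 1) n := by
        rw [descRun_succ_mul_bσ]; simp only [mul_assoc]
    _ = bσ (j + n) * bσ (j + n + 1) * bσ (j + n) * descRun j n * descRun (j + 1) n := by
        rw [← hcomm.eq, bσ_braid_assoc (Or.inr rfl)]; simp only [mul_assoc]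

theorem isRightLcm_descRun_bσ (j n : ℕ) :
    IsRightLcm (descRun (j + 1) n) (bσ j) (descRun (j + 1) n * bσ j * descRun (j + 1) n) := by
  induction n with
  | zero => simpa [descRun_zero] using isRightLcm_one_left (bσ j)
  | succ n ih =>
    have hstep :=
      (isRightLcm_bσ_succ_bσ_mul_descRun (le_refl (j + n))).mul_right (descRun (j + 1) n)
    rw [← descRun_succ_mul_bσ, ← descRun_succ_mul_bσ_mul_descRun_succ, ← descRun_succ_of_succ]
      at hstep
    exact ih.of_rdvd (descRun_succ_of_succ j n ▸ rdvd_mul_left _ _) hstep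

end Braid

theorem braid_lcm_with_generator_general (k j : ℕ) :
    RDvd (bdesc k (j + 1)) (bdesc k (j + 1) * bσ j * bdesc k (j + 1)) ∧
    RDvd (bσ j) (bdesc k (j + 1) * bσ j * bdesc k (j + 1)) ∧
    ∀ x : BraidMonoid, RDvd (bdesc k (j + 1)) x → RDvd (bσ j) x →
      RDvd (bdesc k (j + 1) * bσ j * bdesc k (j + 1)) x := by
  rw [Braid.bdesc_eq_descRun]
  exact Braid.isRightLcm_descRun_bσ j (k - j)

/-- For a = σ_k⋯σ_{j+1} with k > j, the least common multiple of a and σ_j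
with respect to right-divisibility is Δ(a, σ_j) = a σ_j a. -/
theorem braid_lcm_with_generator (k j : ℕ) (h : j < k) :
    RDvd (bdesc k (j + 1)) (bdesc k (j + 1) * bσ j * bdesc k (j + 1)) ∧
    RDvd (bσ j) (bdesc k (j + 1) * bσ j * bdesc k (j + 1)) ∧
    ∀ x : BraidMonoid, RDvd (bdesc k (j + 1)) x → RDvd (bσ j) x →
      RDvd (bdesc k (j + 1) * bσ j * bdesc k (j + 1)) x :=
  braid_lcm_with_generator_general k j

end ArtinStmt
end
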